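/- arXiv:1805.04878 — 2 statements merged into one kernel-verified Lean document; each statement's English description precedes it below -/
import Mathlib

section
/- Let N, c, k be positive integers and set d = gcd(N, c). Then there exists a nonnegative integer i such that gcd(N, k + c·i) = gcd(k, d). -/
/-- If two naturals are congruent mod `n`, they have the same gcd with `n`. -/
lemma gcd_eq_of_mod_eq (n a b : ℕ) (h : a % n = b % n) :
    Nat.gcd n a = Nat.gcd n b := by
  rw [Nat.gcd_rec, Nat.gcd_rec n b, h]

/-- Key step: `gcd(N, k + d·j) = gcd(k, d)` for a suitable `j`, where `d ∣ N`. -/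
lemma exists_gcd_eq_aux (N d k : ℕ) (hN : 0 < N) (hdN : d ∣ N) (hk : 0 < k) :
    ∃ j : ℕ, Nat.gcd N (k + d * j) = Nat.gcd k d := by
  set g := Nat.gcd k d with hg
  have hg0 : 0 < g := Nat.gcd_pos_of_pos_left d hk
  have hgk : g ∣ k := Nat.gcd_dvd_left k d
  have hgd : g ∣ d := Nat.gcd_dvd_right k d
  have hgN : g ∣ N := hgd.trans hdN
  set M := N / g with hM
  set k' := k / g with hk'
  set d' := d / g with hd'
  have hMg : g * M = N := Nat.mul_div_cancel' hgN
  have hkg : g * k' = k := Nat.mul_div_cancel' hgk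
  have hdg : g * d' = d := Nat.mul_div_cancel' hgd
  have hco : Nat.Coprime k' d' := Nat.coprime_div_gcd_div_gcd hg0
  have hM0 : 0 < M := Nat.div_pos (Nat.le_of_dvd hN hgN) hg0
  have hk'0 : 0 < k' := Nat.div_pos (Nat.le_of_dvd hk hgk) hg0
  -- choose j = product of primes dividing M but not k'
  set S : Finset ℕ := M.primeFactors \ k'.primeFactors with hS
  refine ⟨∏ p ∈ S, p, ?_⟩
  set j := ∏ p ∈ S, p with hj
  have hkey : k + d * j = g * (k' + d' * j) := by
    rw [Nat.mul_add, hkg, ← Nat.mul_assoc, hdg]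
  rw [hkey, ← hMg, Nat.gcd_mul_left]
  have hcop : Nat.Coprime M (k' + d' * j) := by
    by_contra hnc
    obtain ⟨p, pp, hpM, hps⟩ := Nat.Prime.not_coprime_iff_dvd.mp hnc
    by_cases hpk : p ∣ k'
    · -- p ∤ d' and p ∤ j, so p ∤ d'*j, contradicting p ∣ k' + d'*j and p ∣ k'
      have hpd : ¬ p ∣ d' := fun h => pp.one_lt.ne' (Nat.eq_one_of_dvd_coprimes hco hpk h)
      have hpj : ¬ p ∣ j := by
        intro h
        obtain ⟨q, hq, hpq⟩ := (Prime.dvd_finset_prod_iff pp.prime _).mp h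
        have hqp : q.Prime := Nat.prime_of_mem_primeFactors (Finset.mem_sdiff.mp hq).1
        have : p = q := (Nat.prime_dvd_prime_iff_eq pp hqp).mp hpq
        subst this
        exact (Finset.mem_sdiff.mp hq).2 (Nat.mem_primeFactors.mpr ⟨pp, hpk, hk'0.ne'⟩)
      have : p ∣ d' * j := (Nat.dvd_add_right hpk).mp hps
      exact (pp.not_dvd_mul hpd hpj) this
    · have hpS : p ∈ S := Finset.mem_sdiff.mpr
        ⟨Nat.mem_primeFactors.mpr ⟨pp, hpM, hM0.ne'⟩,
         fun h => hpk (Nat.dvd_of_mem_primeFactors h)⟩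
      have hpj : p ∣ d' * j := Dvd.dvd.mul_left (Finset.dvd_prod_of_mem _ hpS) d'
      exact hpk (by simpa using Nat.dvd_sub hps hpj)
  rw [hcop.gcd_eq_one, Nat.mul_one]

/-- For positive integers `N, c, k` with `d = gcd(N, c)`, there exists `i ≥ 0` with
`gcd(N, k + c·i) = gcd(k, d)`. -/
theorem exists_gcd_eq (N c k : ℕ) (hN : 0 < N) (hc : 0 < c) (hk : 0 < k) :
    ∃ i : ℕ, Nat.gcd N (k + c * i) = Nat.gcd k (Nat.gcd N c) := by
  set d := Nat.gcd N c with hd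
  obtain ⟨j, hj⟩ := exists_gcd_eq_aux N d k hN (Nat.gcd_dvd_left N c) hk
  -- Bezout: d = N * A + c * B
  set A := Nat.gcdA N c
  set B := Nat.gcdB N c
  have hbez : (d : ℤ) = N * A + c * B := Nat.gcd_eq_gcd_ab N c
  set i : ℕ := ((B * j) % (N : ℤ)).toNat with hi
  have hNne : (N : ℤ) ≠ 0 := by exact_mod_cast hN.ne'
  have hicast : (i : ℤ) = (B * j) % (N : ℤ) :=
    Int.toNat_of_nonneg (Int.emod_nonneg _ hNne)
  refine ⟨i, ?_⟩
  have hmod : ((k + c * i : ℕ) : ℤ) % N = ((k + d * j : ℕ) : ℤ) % N := by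
    have h1 : (i : ℤ) ≡ B * j [ZMOD (N : ℤ)] := by
      rw [hicast]; exact Int.emod_emod_of_dvd _ dvd_rfl
    have h2 : (c : ℤ) * B ≡ (d : ℤ) [ZMOD (N : ℤ)] :=
      Int.modEq_iff_dvd.mpr ⟨A, by linarith⟩
    have : ((k : ℤ) + c * i) ≡ ((k : ℤ) + d * j) [ZMOD (N : ℤ)] := by
      refine Int.ModEq.add_left _ ?_
      calc (c : ℤ) * i ≡ c * (B * j) [ZMOD (N : ℤ)] := h1.mul_left c
        _ = (c * B) * j := by ring
        _ ≡ d * j [ZMOD (N : ℤ)] := h2.mul_right j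
    push_cast
    exact this
  have hmodN : (k + c * i) % N = (k + d * j) % N := by
    exact_mod_cast hmod
  rw [gcd_eq_of_mod_eq N _ _ hmodN, hj]
end

section
/- Let N, c be positive integers, d = gcd(N,c), and let k, l be integers with gcd(k, d) = gcd(l, d). Then the sets {gcd(N, k + c·i) : i ∈ ℤ} and {gcd(N, l + c·i) : i ∈ ℤ} are equal. -/
/-!
Because `gcd(N, ·)` only depends on residues mod `N` and `cℤ + Nℤ = dℤ`, the set in question is
`{gcd(N, x) : x ≡ k [d]}`. Given such an `x`, let `e = gcd(x, d) = gcd(k, d) = gcd(l, d)`. Then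
`x / e` and `l / e` are units mod `d / e`, and since units mod `N` surject onto units mod `d / e`
there is a unit `u` mod `N` with `(x / e) u ≡ l / e [d / e]`. Now `y = x u` satisfies `y ≡ l [d]`
and `gcd(N, y) = gcd(N, x)`.
-/

namespace Int

theorem ModEq.gcd_eq_gcd {n a b : ℤ} (h : a ≡ b [ZMOD n]) : Int.gcd a n = Int.gcd b n := by
  rw [← Int.gcd_emod a, ← Int.gcd_emod b, h.eq]

theorem gcd_mul_right_of_isCoprime {N u : ℤ} (x : ℤ) (hu : IsCoprime u N) :
    Int.gcd N (x * u) = Int.gcd N x := by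
  rw [Int.gcd, Int.gcd, Int.natAbs_mul]
  exact (Int.isCoprime_iff_nat_coprime.mp hu).gcd_mul_right_cancel_right _

theorem exists_isCoprime_modEq_of_dvd {m N : ℤ} (hN : N ≠ 0) (hmN : m ∣ N) {v : ℤ}
    (hv : IsCoprime v m) : ∃ u, IsCoprime u N ∧ u ≡ v [ZMOD m] := by
  have : NeZero N.natAbs := ⟨Int.natAbs_ne_zero.mpr hN⟩
  have hv' : IsCoprime v m.natAbs := by
    rwa [Int.isCoprime_iff_nat_coprime, Int.natAbs_natCast, ← Int.isCoprime_iff_nat_coprime]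
  have hmN' : m.natAbs ∣ N.natAbs := Int.natAbs_dvd_natAbs.mpr hmN
  obtain ⟨U, hU⟩ := ZMod.unitsMap_surjective hmN' (ZMod.unitOfIsCoprime v hv')
  refine ⟨(U : ZMod N.natAbs).val, ?_, ?_⟩
  · rw [Int.isCoprime_iff_nat_coprime, Int.natAbs_natCast]
    exact ZMod.val_coe_unit_coprime U
  · rw [← Int.modEq_natAbs, ← ZMod.intCast_eq_intCast_iff, Int.cast_natCast, ZMod.natCast_val,
      ← ZMod.unitsMap_val hmN', hU, ZMod.coe_unitOfIsCoprime]

theorem exists_isCoprime_mul_modEq {m a b : ℤ} (ha : IsCoprime a m) (hb : IsCoprime b m) :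
    ∃ v, IsCoprime v m ∧ a * v ≡ b [ZMOD m] := by
  obtain ⟨s, t, hst⟩ := ha
  refine ⟨s * b, IsCoprime.mul_left ⟨a, t, by linarith⟩ hb, Int.modEq_iff_dvd.mpr ⟨t * b, ?_⟩⟩
  linear_combination (-b) * hst

theorem exists_isCoprime_mul_modEq_of_dvd {m N a b : ℤ} (hN : N ≠ 0) (hmN : m ∣ N)
    (ha : IsCoprime a m) (hb : IsCoprime b m) : ∃ u, IsCoprime u N ∧ a * u ≡ b [ZMOD m] := by
  obtain ⟨v, hv, hav⟩ := exists_isCoprime_mul_modEq ha hb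
  obtain ⟨u, hu, huv⟩ := exists_isCoprime_modEq_of_dvd hN hmN hv
  exact ⟨u, hu, (huv.mul_left a).trans hav⟩

theorem exists_modEq_gcd_eq_gcd {N d x l : ℤ} (hN : N ≠ 0) (hd : d ∣ N)
    (h : Int.gcd x d = Int.gcd l d) : ∃ y, y ≡ l [ZMOD d] ∧ Int.gcd N y = Int.gcd N x := by
  have he : 0 < Int.gcd x d := Int.gcd_pos_of_ne_zero_right x (ne_zero_of_dvd_ne_zero hN hd)
  have hx : IsCoprime (x / Int.gcd x d) (d / Int.gcd x d) :=
    Int.isCoprime_iff_gcd_eq_one.mpr (Int.gcd_ediv_gcd_ediv_gcd he)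
  have hl : IsCoprime (l / Int.gcd x d) (d / Int.gcd x d) := by
    rw [h] at he ⊢
    exact Int.isCoprime_iff_gcd_eq_one.mpr (Int.gcd_ediv_gcd_ediv_gcd he)
  obtain ⟨u, hu, hxu⟩ := exists_isCoprime_mul_modEq_of_dvd hN
    ((Int.ediv_dvd_of_dvd (Int.gcd_dvd_right x d)).trans hd) hx hl
  refine ⟨x * u, ?_, Int.gcd_mul_right_of_isCoprime x hu⟩
  have := hxu.mul_left' (c := Int.gcd x d)
  rwa [← mul_assoc, Int.mul_ediv_cancel' (Int.gcd_dvd_left x d),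
    Int.mul_ediv_cancel' (Int.gcd_dvd_right x d), h, Int.mul_ediv_cancel' (Int.gcd_dvd_left l d)]
    at this

theorem setOf_gcd_add_mul_eq (N c k : ℤ) :
    {g : ℕ | ∃ i : ℤ, Int.gcd N (k + c * i) = g} =
      {g : ℕ | ∃ x, x ≡ k [ZMOD Int.gcd N c] ∧ Int.gcd N x = g} := by
  ext g
  constructor
  · rintro ⟨i, rfl⟩
    have hci : c * i ≡ 0 [ZMOD Int.gcd N c] :=
      Int.modEq_zero_iff_dvd.mpr ((Int.gcd_dvd_right N c).mul_right i)
    exact ⟨k + c * i, by simpa using (Int.ModEq.refl k).add hci, rfl⟩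
  · rintro ⟨x, hx, rfl⟩
    obtain ⟨m, hm⟩ := hx.symm.dvd
    refine ⟨Int.gcdB N c * m, ?_⟩
    have hx : x = k + c * (Int.gcdB N c * m) + N * (Int.gcdA N c * m) := by
      rw [Int.gcd_eq_gcd_ab] at hm
      linear_combination hm
    rw [hx, Int.gcd_add_mul_left_right]

theorem setOf_gcd_modEq_subset {N d k l : ℤ} (hN : N ≠ 0) (hd : d ∣ N)
    (h : Int.gcd k d = Int.gcd l d) :
    {g : ℕ | ∃ x, x ≡ k [ZMOD d] ∧ Int.gcd N x = g} ⊆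
      {g : ℕ | ∃ y, y ≡ l [ZMOD d] ∧ Int.gcd N y = g} := by
  rintro _ ⟨x, hx, rfl⟩
  exact exists_modEq_gcd_eq_gcd hN hd (hx.gcd_eq_gcd.trans h)

end Int

theorem gcd_value_sets_eq_general (N c : ℤ) (hN : 0 < N) (k l : ℤ)
    (h : Int.gcd k (Int.gcd N c) = Int.gcd l (Int.gcd N c)) :
    {g : ℕ | ∃ i : ℤ, Int.gcd N (k + c * i) = g} =
      {g : ℕ | ∃ i : ℤ, Int.gcd N (l + c * i) = g} := by
  rw [Int.setOf_gcd_add_mul_eq, Int.setOf_gcd_add_mul_eq]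
  exact (Int.setOf_gcd_modEq_subset hN.ne' (Int.gcd_dvd_left N c) h).antisymm
    (Int.setOf_gcd_modEq_subset hN.ne' (Int.gcd_dvd_left N c) h.symm)

/-- If `d = gcd(N, c)` and `gcd(k, d) = gcd(l, d)`, then the sets
`{gcd(N, k + c·i) : i ∈ ℤ}` and `{gcd(N, l + c·i) : i ∈ ℤ}` coincide. -/
theorem gcd_value_sets_eq (N c : ℤ) (hN : 0 < N) (hc : 0 < c) (k l : ℤ)
    (h : Int.gcd k (Int.gcd N c) = Int.gcd l (Int.gcd N c)) :
    {g : ℕ | ∃ i : ℤ, Int.gcd N (k + c * i) = g} =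
      {g : ℕ | ∃ i : ℤ, Int.gcd N (l + c * i) = g} :=
  gcd_value_sets_eq_general N c hN k l h
end
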